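/- arXiv:2007.05591 — 2 statements merged into one kernel-verified Lean document; each statement's English description precedes it below -/
import Mathlib

section
/- Let (ℓ_p)_{p∈P} be path latencies at a flow x, let ℓ_p^mc ≥ ℓ_p pointwise with ℓ_p^mc(x) ≤ γ·ℓ_p(x), and let (δ_p)_{p∈P} be real numbers with Σ_p δ_p = 0 and Σ_{p: δ_p > 0} δ_p ≤ r. Suppose there is a path p̄ with ℓ_{p̄}^mc(x) ≥ ℓ_p^mc(x) for all p with δ_p > 0 and ℓ_{p̄}(x) ≤ ℓ_p(x) for all p with δ_p < 0, and write Λ = ℓ_{p̄}(x). Then Σ_p δ_p·ℓ_p^mc(x) ≤ Λ·r·(γ−1). -/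
/-
Split the sum by the sign of `δ`. On paths with `δ_p > 0` the marginal cost is at most
`ℓ^mc_p̄(x)`, on paths with `δ_p < 0` it is at least `ℓ_p(x) ≥ Λ`; since the negative part of `δ`
has the same mass as the positive part, the sum is at most `(ℓ^mc_p̄(x) - Λ)` times the positive
mass, and `ℓ^mc_p̄(x) - Λ ≤ (γ - 1) Λ`.
-/

open Finset

lemma mul_le_add_mul_ite_pos {d m l M Λ : ℝ} (hlm : l ≤ m) (hM : 0 < d → m ≤ M)
    (hΛ : d < 0 → Λ ≤ l) :
    d * m ≤ Λ * d + (M - Λ) * (if 0 < d then d else 0) := by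
  rcases lt_trichotomy d 0 with hd | rfl | hd
  · rw [if_neg hd.not_gt]
    nlinarith [hΛ hd]
  · simp
  · rw [if_pos hd]
    nlinarith [hM hd]

lemma sum_mul_le_add_mul_sum_pos {ι : Type*} (s : Finset ι) {δ m l : ι → ℝ} {M Λ : ℝ}
    (hlm : ∀ i ∈ s, l i ≤ m i) (hM : ∀ i ∈ s, 0 < δ i → m i ≤ M)
    (hΛ : ∀ i ∈ s, δ i < 0 → Λ ≤ l i) :
    ∑ i ∈ s, δ i * m i ≤ Λ * ∑ i ∈ s, δ i + (M - Λ) * ∑ i ∈ s with 0 < δ i, δ i :=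
  calc ∑ i ∈ s, δ i * m i
      ≤ ∑ i ∈ s, (Λ * δ i + (M - Λ) * if 0 < δ i then δ i else 0) :=
        sum_le_sum fun i hi => mul_le_add_mul_ite_pos (hlm i hi) (hM i hi) (hΛ i hi)
    _ = Λ * ∑ i ∈ s, δ i + (M - Λ) * ∑ i ∈ s with 0 < δ i, δ i := by
        rw [sum_add_distrib, ← mul_sum, ← mul_sum, sum_filter]

open Finset in
theorem stmt12_general {P : Type*} [Fintype P]
    (L Lmc δ : P → ℝ) (γ r Λ : ℝ) (hγ : 1 ≤ γ)
    (hLnn : ∀ p, 0 ≤ L p)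
    (hLle : ∀ p, L p ≤ Lmc p)
    (hLγ : ∀ p, Lmc p ≤ γ * L p)
    (hsum : ∑ p, δ p = 0)
    (hpos : ∑ p ∈ Finset.univ.filter (fun p => 0 < δ p), δ p ≤ r)
    (pbar : P)
    (hmax : ∀ p, 0 < δ p → Lmc p ≤ Lmc pbar)
    (hmin : ∀ p, δ p < 0 → L pbar ≤ L p)
    (hΛ : Λ = L pbar) :
    ∑ p, δ p * Lmc p ≤ Λ * r * (γ - 1) := by
  subst hΛ
  have hsplit := sum_mul_le_add_mul_sum_pos univ (fun p _ => hLle p) (fun p _ => hmax p)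
    (fun p _ => hmin p)
  have hgap : Lmc pbar - L pbar ≤ (γ - 1) * L pbar := by linarith [hLγ pbar]
  have hposMass : 0 ≤ ∑ p ∈ univ with 0 < δ p, δ p :=
    sum_nonneg fun p hp => (mem_filter.1 hp).2.le
  have hcoef : 0 ≤ (γ - 1) * L pbar := mul_nonneg (sub_nonneg.2 hγ) (hLnn pbar)
  rw [hsum, mul_zero, zero_add] at hsplit
  calc ∑ p, δ p * Lmc p
      ≤ (Lmc pbar - L pbar) * ∑ p ∈ univ with 0 < δ p, δ p := hsplit
    _ ≤ (γ - 1) * L pbar * ∑ p ∈ univ with 0 < δ p, δ p :=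
        mul_le_mul_of_nonneg_right hgap hposMass
    _ ≤ (γ - 1) * L pbar * r := mul_le_mul_of_nonneg_left hpos hcoef
    _ = L pbar * r * (γ - 1) := by ring

open Finset in
/-- The key finite-sum inequality in the proof of Lemma 1:
`∑_p δ_p·ℓ_p^mc(x) ≤ Λ·r·(γ−1)`. -/
theorem stmt12 {P : Type*} [Fintype P] [DecidableEq P]
    (L Lmc δ : P → ℝ) (γ r Λ : ℝ) (hγ : 1 ≤ γ) (hrnn : 0 ≤ r)
    (hLnn : ∀ p, 0 ≤ L p)
    (hLle : ∀ p, L p ≤ Lmc p)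
    (hLγ : ∀ p, Lmc p ≤ γ * L p)
    (hsum : ∑ p, δ p = 0)
    (hpos : ∑ p ∈ Finset.univ.filter (fun p => 0 < δ p), δ p ≤ r)
    (pbar : P)
    (hmax : ∀ p, 0 < δ p → Lmc p ≤ Lmc pbar)
    (hmin : ∀ p, δ p < 0 → L pbar ≤ L p)
    (hΛ : Λ = L pbar) :
    ∑ p, δ p * Lmc p ≤ Λ * r * (γ - 1) :=
  stmt12_general L Lmc δ γ r Λ hγ hLnn hLle hLγ hsum hpos pbar hmax hmin hΛ
end

section
/- For every integer p ≥ 1, 1 + p/2 > 1/(1 − p·(p+1)^(−(p+1)/p)); that is, the maximum perversity index for degree-p polynomial latencies strictly exceeds the fully-selfish price of anarchy. -/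
/-! Writing `q = (p+1)^((p+1)/p)`, the price of anarchy is `q/(q - p)`, and
`q/(q - p) < 1 + p/2` amounts to `q > p + 2`, i.e. to `(p+2)^p < (p+1)^(p+1)`.
That integer inequality follows by induction from `(n+3)(n+1) < (n+2)^2`. -/

theorem add_two_pow_lt_add_one_pow_succ {n : ℕ} (hn : 1 ≤ n) :
    (n + 2) ^ n < (n + 1) ^ (n + 1) := by
  induction n, hn using Nat.le_induction with
  | base => norm_num
  | succ n hn ih =>
    have hsq : ((n + 3) * (n + 1)) ^ (n + 1) < ((n + 2) ^ 2) ^ (n + 1) :=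
      Nat.pow_lt_pow_left (by nlinarith) (by omega)
    have key : (n + 3) ^ (n + 1) * (n + 2) ^ n < (n + 2) ^ (n + 2) * (n + 2) ^ n :=
      calc (n + 3) ^ (n + 1) * (n + 2) ^ n
          < (n + 3) ^ (n + 1) * (n + 1) ^ (n + 1) := by gcongr
        _ = ((n + 3) * (n + 1)) ^ (n + 1) := (mul_pow ..).symm
        _ < ((n + 2) ^ 2) ^ (n + 1) := hsq
        _ = (n + 2) ^ (n + 2) * (n + 2) ^ n := by rw [← pow_mul, ← pow_add]; ring_nf
    exact lt_of_mul_lt_mul_right key (Nat.zero_le _)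

theorem add_two_lt_add_one_rpow {p : ℕ} (hp : 1 ≤ p) :
    (p : ℝ) + 2 < ((p : ℝ) + 1) ^ (((p : ℝ) + 1) / p) := by
  have hp' : (0 : ℝ) < p := by exact_mod_cast hp
  rw [div_eq_mul_inv, Real.rpow_mul (by positivity),
    Real.lt_rpow_inv_iff_of_pos (by positivity) (by positivity) hp', ← Nat.cast_add_one,
    Real.rpow_natCast, Real.rpow_natCast]
  exact_mod_cast add_two_pow_lt_add_one_pow_succ hp

theorem one_div_one_sub_div_lt {p q : ℝ} (hp : 0 < p) (hq : p + 2 < q) :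
    1 / (1 - p / q) < 1 + p / 2 := by
  have hq0 : 0 < q := by linarith
  rw [one_sub_div hq0.ne', one_div_div, div_lt_iff₀ (by linarith)]
  nlinarith

/-- For every `p ≥ 1`, the maximum perversity index `1 + p/2` for degree-`p`
polynomial latencies strictly exceeds the fully-selfish price of anarchy
`1/(1 − p·(p+1)^(−(p+1)/p))`. -/
theorem stmt17 (p : ℕ) (hp : 1 ≤ p) :
    1 + (p : ℝ) / 2 > 1 / (1 - (p : ℝ) * ((p : ℝ) + 1) ^ (-(((p : ℝ) + 1) / p))) := by
  rw [Real.rpow_neg (by positivity), ← div_eq_mul_inv]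
  exact one_div_one_sub_div_lt (by exact_mod_cast hp) (add_two_lt_add_one_rpow hp)
end
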